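/- Let n ∈ {0,1,2} and γ = (n+3)/(n+1). Suppose C¹ functions ρ(t,r) > 0, u(t,r), p(t,r) on a domain with r > 0 satisfy the Eulerian gas dynamics system ρ_t + u ρ_r + (ρ/r^n)(r^n u)_r = 0, u_t + u u_r + p_r/ρ = 0, p_t + u p_r + (γ p/r^n)(r^n u)_r = 0. Then the following two additional conservation laws hold: (i) ∂_t[ r^n ( 2t ( p/(γ−1) + ρu²/2 ) − r ρ u ) ] + ∂_r[ r^n ( 2t ( p/(γ−1) + ρu²/2 + p ) u − r ( ρu² + p ) ) ] = 0; and (ii) ∂_t[ r^n ( t² ( p/(γ−1) + ρu²/2 ) − t r ρ u + (r²/2) ρ ) ] + ∂_r[ r^n ( t² ( p/(γ−1) + ρu²/2 + p ) u − t r ( ρu² + p ) + (r²/2) ρ u ) ] = 0. -/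

import Mathlib

set_option maxHeartbeats 2000000

/-- Partial derivative with respect to the first argument (time t). -/
noncomputable def pd1 (f : ℝ → ℝ → ℝ) (t r : ℝ) : ℝ := deriv (fun τ => f τ r) t

/-- Partial derivative with respect to the second argument (space r). -/
noncomputable def pd2 (f : ℝ → ℝ → ℝ) (t r : ℝ) : ℝ := deriv (fun ξ => f t ξ) r

/-- The Eulerian gas dynamics system for one-dimensional flows of a polytropic gas:
ρ_t + u ρ_r + (ρ/rⁿ)(rⁿu)_r = 0, u_t + u u_r + p_r/ρ = 0,
p_t + u p_r + (γp/rⁿ)(rⁿu)_r = 0. -/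
def EulerSystem (n : ℕ) (γ : ℝ) (ρ u p : ℝ → ℝ → ℝ) (t r : ℝ) : Prop :=
  pd1 ρ t r + u t r * pd2 ρ t r
      + (ρ t r / r ^ n) * pd2 (fun t1 r1 => r1 ^ n * u t1 r1) t r = 0 ∧
    pd1 u t r + u t r * pd2 u t r + pd2 p t r / ρ t r = 0 ∧
    pd1 p t r + u t r * pd2 p t r
      + (γ * p t r / r ^ n) * pd2 (fun t1 r1 => r1 ^ n * u t1 r1) t r = 0
/-- the two additional conservation laws of the Eulerian gas dynamics system
for the special adiabatic exponent γ = (n+3)/(n+1). -/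
theorem eulerian_additional_conservation_laws_special_gamma
    (n : ℕ) (hn : n ∈ ({0, 1, 2} : Set ℕ))
    (γ : ℝ) (hγ : γ = ((n : ℝ) + 3) / ((n : ℝ) + 1))
    (ρ u p : ℝ → ℝ → ℝ)
    (hρ : ContDiff ℝ 1 (fun q : ℝ × ℝ => ρ q.1 q.2))
    (hu : ContDiff ℝ 1 (fun q : ℝ × ℝ => u q.1 q.2))
    (hp : ContDiff ℝ 1 (fun q : ℝ × ℝ => p q.1 q.2))
    (hρpos : ∀ t r, 0 < r → 0 < ρ t r)
    (hsys : ∀ t r, 0 < r → EulerSystem n γ ρ u p t r) :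
    (∀ t r : ℝ, 0 < r →
      pd1 (fun t1 r1 =>
          r1 ^ n * (2 * t1 * (p t1 r1 / (γ - 1) + ρ t1 r1 * u t1 r1 ^ 2 / 2)
            - r1 * ρ t1 r1 * u t1 r1)) t r
        + pd2 (fun t1 r1 =>
            r1 ^ n * (2 * t1 * (p t1 r1 / (γ - 1) + ρ t1 r1 * u t1 r1 ^ 2 / 2 + p t1 r1) * u t1 r1
              - r1 * (ρ t1 r1 * u t1 r1 ^ 2 + p t1 r1))) t r
        = 0)
    ∧
    (∀ t r : ℝ, 0 < r →
      pd1 (fun t1 r1 =>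
          r1 ^ n * (t1 ^ 2 * (p t1 r1 / (γ - 1) + ρ t1 r1 * u t1 r1 ^ 2 / 2)
            - t1 * r1 * ρ t1 r1 * u t1 r1 + (r1 ^ 2 / 2) * ρ t1 r1)) t r
        + pd2 (fun t1 r1 =>
            r1 ^ n * (t1 ^ 2 * (p t1 r1 / (γ - 1) + ρ t1 r1 * u t1 r1 ^ 2 / 2 + p t1 r1) * u t1 r1
              - t1 * r1 * (ρ t1 r1 * u t1 r1 ^ 2 + p t1 r1)
              + (r1 ^ 2 / 2) * ρ t1 r1 * u t1 r1)) t r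
        = 0) := by
  simp only [Set.mem_insert_iff, Set.mem_singleton_iff] at hn
  subst hγ
  have key : ∀ f : ℝ → ℝ → ℝ, ContDiff ℝ 1 (fun q : ℝ × ℝ => f q.1 q.2) →
      (∀ t r : ℝ, HasDerivAt (fun τ => f τ r) (pd1 f t r) t) ∧
      (∀ t r : ℝ, HasDerivAt (fun ξ => f t ξ) (pd2 f t r) r) := by
    intro f hf
    constructor <;> intro t r
    · exact (((hf.differentiable one_ne_zero) (t, r)).comp t
        (differentiableAt_id.prodMk (differentiableAt_const r))).hasDerivAt
    · exact (((hf.differentiable one_ne_zero) (t, r)).comp r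
        ((differentiableAt_const t).prodMk differentiableAt_id)).hasDerivAt
  obtain ⟨hρ1, hρ2⟩ := key ρ hρ
  obtain ⟨hu1, hu2⟩ := key u hu
  obtain ⟨hp1, hp2⟩ := key p hp
  set γ : ℝ := ((n : ℝ) + 3) / ((n : ℝ) + 1) with hγ
  have hγ1 : γ - 1 ≠ 0 := by
    have h1 : (0:ℝ) < (n : ℝ) + 1 := by positivity
    have : γ - 1 = 2 / ((n:ℝ) + 1) := by
      rw [hγ]; field_simp; ring
    rw [this]; positivity
  constructor <;> intro t r hr
  · -- first conservation law
    have hrne : r ≠ 0 := ne_of_gt hr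
    have hRne : ρ t r ≠ 0 := ne_of_gt (hρpos t r hr)
    have hrn : (r : ℝ) ^ n ≠ 0 := pow_ne_zero _ hrne
    obtain ⟨E1, E2, E3⟩ := hsys t r hr
    have ederiv : pd2 (fun t1 r1 => r1 ^ n * u t1 r1) t r
        = (n : ℝ) * r ^ (n - 1) * u t r + r ^ n * pd2 u t r :=
      ((hasDerivAt_pow n r).mul (hu2 t r)).deriv
    rw [ederiv] at E1 E3
    have e1 : pd1 (fun t1 r1 =>
        r1 ^ n * (2 * t1 * (p t1 r1 / (γ - 1) + ρ t1 r1 * u t1 r1 ^ 2 / 2)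
          - r1 * ρ t1 r1 * u t1 r1)) t r = _ :=
      (((((hasDerivAt_id t).const_mul 2).mul
          (((hp1 t r).div_const (γ - 1)).add
            (((hρ1 t r).mul ((hu1 t r).pow 2)).div_const 2))).sub
        (((hρ1 t r).const_mul r).mul (hu1 t r))).const_mul (r ^ n)).deriv
    have e2 : pd2 (fun t1 r1 =>
        r1 ^ n * (2 * t1 * (p t1 r1 / (γ - 1) + ρ t1 r1 * u t1 r1 ^ 2 / 2 + p t1 r1) * u t1 r1
          - r1 * (ρ t1 r1 * u t1 r1 ^ 2 + p t1 r1))) t r = _ :=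
      ((hasDerivAt_pow n r).mul
        ((((((((hp2 t r).div_const (γ - 1)).add
              (((hρ2 t r).mul ((hu2 t r).pow 2)).div_const 2)).add (hp2 t r)).const_mul
            (2 * t)).mul (hu2 t r))).sub
          ((hasDerivAt_id r).mul (((hρ2 t r).mul ((hu2 t r).pow 2)).add (hp2 t r))))).deriv
    rw [e1, e2]
    simp only [Pi.add_apply, Pi.sub_apply, Pi.mul_apply, Pi.pow_apply, Pi.div_apply, id]
    have hρt : pd1 ρ t r = -(u t r * pd2 ρ t r
        + (ρ t r / r ^ n) * ((n : ℝ) * r ^ (n - 1) * u t r + r ^ n * pd2 u t r)) := by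
      linear_combination E1
    have hut : pd1 u t r = -(u t r * pd2 u t r + pd2 p t r / ρ t r) := by
      linear_combination E2
    have hpt : pd1 p t r = -(u t r * pd2 p t r
        + (γ * p t r / r ^ n) * ((n : ℝ) * r ^ (n - 1) * u t r + r ^ n * pd2 u t r)) := by
      linear_combination E3
    rw [hρt, hut, hpt, hγ]
    rcases hn with rfl | rfl | rfl <;>
      · push_cast
        field_simp
        ring
  · -- second conservation law
    have hrne : r ≠ 0 := ne_of_gt hr
    have hRne : ρ t r ≠ 0 := ne_of_gt (hρpos t r hr)
    have hrn : (r : ℝ) ^ n ≠ 0 := pow_ne_zero _ hrne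
    obtain ⟨E1, E2, E3⟩ := hsys t r hr
    have ederiv : pd2 (fun t1 r1 => r1 ^ n * u t1 r1) t r
        = (n : ℝ) * r ^ (n - 1) * u t r + r ^ n * pd2 u t r :=
      ((hasDerivAt_pow n r).mul (hu2 t r)).deriv
    rw [ederiv] at E1 E3
    have e1 : pd1 (fun t1 r1 =>
        r1 ^ n * (t1 ^ 2 * (p t1 r1 / (γ - 1) + ρ t1 r1 * u t1 r1 ^ 2 / 2)
          - t1 * r1 * ρ t1 r1 * u t1 r1 + (r1 ^ 2 / 2) * ρ t1 r1)) t r = _ :=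
      (((((hasDerivAt_pow 2 t).mul
            (((hp1 t r).div_const (γ - 1)).add
              (((hρ1 t r).mul ((hu1 t r).pow 2)).div_const 2))).sub
          ((((hasDerivAt_id t).mul_const r).mul (hρ1 t r)).mul (hu1 t r))).add
        ((hρ1 t r).const_mul (r ^ 2 / 2))).const_mul (r ^ n)).deriv
    have e2 : pd2 (fun t1 r1 =>
        r1 ^ n * (t1 ^ 2 * (p t1 r1 / (γ - 1) + ρ t1 r1 * u t1 r1 ^ 2 / 2 + p t1 r1) * u t1 r1
          - t1 * r1 * (ρ t1 r1 * u t1 r1 ^ 2 + p t1 r1)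
          + (r1 ^ 2 / 2) * ρ t1 r1 * u t1 r1)) t r = _ :=
      ((hasDerivAt_pow n r).mul
        (((((((((hp2 t r).div_const (γ - 1)).add
                (((hρ2 t r).mul ((hu2 t r).pow 2)).div_const 2)).add (hp2 t r)).const_mul
              (t ^ 2)).mul (hu2 t r))).sub
            ((((hasDerivAt_id r).const_mul t).mul
              (((hρ2 t r).mul ((hu2 t r).pow 2)).add (hp2 t r))))).add
          ((((hasDerivAt_pow 2 r).div_const 2).mul (hρ2 t r)).mul (hu2 t r)))).deriv
    rw [e1, e2]
    simp only [Pi.add_apply, Pi.sub_apply, Pi.mul_apply, Pi.pow_apply, Pi.div_apply, id]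
    have hρt : pd1 ρ t r = -(u t r * pd2 ρ t r
        + (ρ t r / r ^ n) * ((n : ℝ) * r ^ (n - 1) * u t r + r ^ n * pd2 u t r)) := by
      linear_combination E1
    have hut : pd1 u t r = -(u t r * pd2 u t r + pd2 p t r / ρ t r) := by
      linear_combination E2
    have hpt : pd1 p t r = -(u t r * pd2 p t r
        + (γ * p t r / r ^ n) * ((n : ℝ) * r ^ (n - 1) * u t r + r ^ n * pd2 u t r)) := by
      linear_combination E3
    rw [hρt, hut, hpt, hγ]
    rcases hn with rfl | rfl | rfl <;>
      · push_cast
        field_simp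
        ring
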